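/- Let q ∈ (0,1), let {ν_s}_{s≥0} be probability measures with pairwise density ratio bounds C⁻¹ ≤ dν_s/dν_t ≤ C for all s, t (for some C ≥ 1), and define μ^(t) = (1-q)^t μ^(0) + q ∑_{s=0}^{t-1}(1-q)^{t-s-1} ν_s for a probability measure μ^(0). Then for all t with (1-q)^t ≤ 1/2, we have μ^(t) ≥ (1/(2C))·ν_t as measures. -/
import Mathlib


open MeasureTheory

theorem efp_iterate_dominates_gibbs {α : Type*} [MeasurableSpace α]
    (q C : ℝ) (hq0 : 0 < q) (hq1 : q < 1) (hC : 1 ≤ C)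
    (ν : ℕ → Measure α) (μ₀ : Measure α)
    [IsProbabilityMeasure μ₀] [∀ s, IsProbabilityMeasure (ν s)]
    (hratio : ∀ s u : ℕ, ∀ A : Set α, MeasurableSet A →
      (ν u) A ≤ ENNReal.ofReal C * (ν s) A)
    (t : ℕ) (ht : (1 - q) ^ t ≤ 1 / 2) :
    ∀ A : Set α, MeasurableSet A →
      ENNReal.ofReal (1 / (2 * C)) * (ν t) A ≤
        (ENNReal.ofReal ((1 - q) ^ t) • μ₀ +
          ∑ s ∈ Finset.range t,
            ENNReal.ofReal (q * (1 - q) ^ (t - s - 1)) • ν s) A := by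
  intro A hA
  have hC0 : (0:ℝ) < C := lt_of_lt_of_le one_pos hC
  have hq' : (0:ℝ) ≤ 1 - q := by linarith
  have key : ∀ s, ENNReal.ofReal (1 / C) * ν t A ≤ ν s A := by
    intro s
    calc ENNReal.ofReal (1 / C) * ν t A
        ≤ ENNReal.ofReal (1 / C) * (ENNReal.ofReal C * ν s A) := by
          gcongr; exact hratio s t A hA
      _ = ENNReal.ofReal (1 / C * C) * ν s A := by
          rw [ENNReal.ofReal_mul (by positivity), mul_assoc]
      _ = ν s A := by
          rw [one_div, inv_mul_cancel₀ hC0.ne', ENNReal.ofReal_one, one_mul]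
  have hid : ∑ s ∈ Finset.range t, q * (1 - q) ^ (t - s - 1) = 1 - (1 - q) ^ t := by
    have hre := Finset.sum_range_reflect (fun j => q * (1 - q) ^ j) t
    have h1 : ∑ s ∈ Finset.range t, q * (1 - q) ^ (t - s - 1)
        = ∑ j ∈ Finset.range t, q * (1 - q) ^ j := by
      rw [← hre]
      apply Finset.sum_congr rfl
      intro s hs
      rw [Nat.sub_right_comm]
    rw [h1, ← Finset.mul_sum, geom_sum_eq (by intro h; nlinarith [sub_eq_iff_eq_add.mp h]) t]
    rw [show (1:ℝ) - q - 1 = -q by ring, div_neg, mul_neg, mul_comm q, div_mul_cancel₀ _ hq0.ne']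
    ring
  have hsum : ENNReal.ofReal ((1 - (1 - q) ^ t) / C) * ν t A ≤
      ∑ s ∈ Finset.range t, ENNReal.ofReal (q * (1 - q) ^ (t - s - 1)) * ν s A := by
    have step : ∀ s ∈ Finset.range t,
        ENNReal.ofReal (q * (1 - q) ^ (t - s - 1) / C) * ν t A ≤
          ENNReal.ofReal (q * (1 - q) ^ (t - s - 1)) * ν s A := by
      intro s _
      calc ENNReal.ofReal (q * (1 - q) ^ (t - s - 1) / C) * ν t A
          = ENNReal.ofReal (q * (1 - q) ^ (t - s - 1)) *
              (ENNReal.ofReal (1 / C) * ν t A) := by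
            rw [← mul_assoc, ← ENNReal.ofReal_mul (by positivity)]
            ring_nf
        _ ≤ ENNReal.ofReal (q * (1 - q) ^ (t - s - 1)) * ν s A := by
            gcongr; exact key s
    calc ENNReal.ofReal ((1 - (1 - q) ^ t) / C) * ν t A
        = ∑ s ∈ Finset.range t,
            ENNReal.ofReal (q * (1 - q) ^ (t - s - 1) / C) * ν t A := by
          rw [← Finset.sum_mul, ← ENNReal.ofReal_sum_of_nonneg (fun s _ => by positivity),
            ← Finset.sum_div, hid]
      _ ≤ _ := Finset.sum_le_sum step
  have hhalf : (1:ℝ) / (2 * C) ≤ (1 - (1 - q) ^ t) / C := by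
    rw [show (1:ℝ) / (2 * C) = (1/2) / C by rw [div_div]]
    gcongr
    linarith
  calc ENNReal.ofReal (1 / (2 * C)) * ν t A
      ≤ ENNReal.ofReal ((1 - (1 - q) ^ t) / C) * ν t A :=
        mul_le_mul_left (ENNReal.ofReal_le_ofReal hhalf) _
    _ ≤ ∑ s ∈ Finset.range t, ENNReal.ofReal (q * (1 - q) ^ (t - s - 1)) * ν s A := hsum
    _ ≤ _ := by
        simp only [Measure.add_apply, Measure.coe_finset_sum, Finset.sum_apply,
          Measure.smul_apply, smul_eq_mul]
        exact le_add_self
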